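/- Suppose Ã(t) and Ã(t′) commute for all t, t′ in [a,b] (Ã continuous matrix-valued). Then Θ(t−s)·I + ∑_{n=1}^∞ (Θ ★ A^{★n})(t,s) = exp(∫ₛᵗ Ã(τ)dτ)·Θ(t−s), where A(t,s) = Ã(t)Θ(t−s). -/

import Mathlib

/-!
Extend `Ã` from `[a,b]` to a continuous function on `ℝ` with pairwise commuting values and put
`F(s,t) = ∫ₛᵗ Ã`. Because `Ã(t)` commutes with `F(s,t)`,
`∂ₜ (F(s,t)^(n+1) / (n+1)!) = Ã(t) F(s,t)^n / n!`, while the two Heaviside factors of a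
`★`-product cut `∫ₐᵇ` down to `∫ₛᵗ`. By induction, `A^{★(n+1)}(t,s) = Θ(t-s) Ã(t) F(s,t)^n / n!`
and `(Θ ★ A^{★(n+1)})(t,s) = Θ(t-s) F(s,t)^(n+1) / (n+1)!`, and these terms sum to
`Θ(t-s) (exp F(s,t) - 1)`.
-/

open MeasureTheory Set

/-- Heaviside function: `Θ x = 1` if `x ≥ 0`, else `0`. -/
noncomputable def Heaviside (x : ℝ) : ℝ := if 0 ≤ x then 1 else 0

/-- Operators on `ℂ^N`, formalizing `N × N` complex matrices. -/
abbrev MatN (N : ℕ) := (Fin N → ℂ) →L[ℂ] (Fin N → ℂ)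

/-- The matrix `★`-product of two matrix kernels on `[a,b]²`. -/
noncomputable def mStarProd {N : ℕ} (a b : ℝ) (G H : ℝ → ℝ → MatN N) : ℝ → ℝ → MatN N :=
  fun t s => ∫ τ in a..b, G t τ * H τ s

/-- `mStarPow a b A n` is the `(n+1)`-st `★`-power `A^{★(n+1)}`. -/
noncomputable def mStarPow {N : ℕ} (a b : ℝ) (A : ℝ → ℝ → MatN N) : ℕ → ℝ → ℝ → MatN N
  | 0 => A
  | n + 1 => mStarProd a b A (mStarPow a b A n)

/-- The Heaviside kernel times the identity matrix. -/
noncomputable def thetaI (N : ℕ) : ℝ → ℝ → MatN N := fun t s => Heaviside (t - s) • 1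

open scoped Nat

lemma Heaviside_of_nonneg {x : ℝ} (h : 0 ≤ x) : Heaviside x = 1 := if_pos h

lemma Heaviside_of_neg {x : ℝ} (h : x < 0) : Heaviside x = 0 := if_neg (not_le.mpr h)

lemma Heaviside_sub_mul_Heaviside_sub_smul {E : Type*} [AddCommGroup E] [Module ℝ E]
    (s t τ : ℝ) (v : E) :
    (Heaviside (t - τ) * Heaviside (τ - s)) • v = (Icc s t).indicator (fun _ => v) τ := by
  by_cases hτ : τ ∈ Icc s t
  · rw [indicator_of_mem hτ, Heaviside_of_nonneg (sub_nonneg.2 hτ.2),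
      Heaviside_of_nonneg (sub_nonneg.2 hτ.1), one_mul, one_smul]
  · rw [indicator_of_notMem hτ]
    rcases not_and_or.1 hτ with hsτ | hτt
    · rw [Heaviside_of_neg (sub_neg.2 (not_le.1 hsτ)), mul_zero, zero_smul]
    · rw [Heaviside_of_neg (sub_neg.2 (not_le.1 hτt)), zero_mul, zero_smul]

lemma integral_Heaviside_mul_Heaviside_smul {E : Type*} [NormedAddCommGroup E] [NormedSpace ℝ E]
    {a b s t : ℝ} (has : a ≤ s) (htb : t ≤ b) (g : ℝ → E) :
    ∫ τ in a..b, (Heaviside (t - τ) * Heaviside (τ - s)) • g τ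
      = Heaviside (t - s) • ∫ τ in s..t, g τ := by
  have hind : (fun τ => (Heaviside (t - τ) * Heaviside (τ - s)) • g τ) = (Icc s t).indicator g :=
    funext fun τ => Heaviside_sub_mul_Heaviside_sub_smul s t τ (g τ)
  rw [hind]
  rcases le_or_gt s t with hst | hts
  · rw [Heaviside_of_nonneg (sub_nonneg.2 hst), one_smul,
      intervalIntegral.integral_of_le ((has.trans hst).trans htb),
      intervalIntegral.integral_of_le hst, setIntegral_indicator measurableSet_Icc]
    refine setIntegral_congr_set ?_
    rw [← inter_eq_right.2 (Ioc_subset_Ioc has htb)]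
    exact Filter.EventuallyEq.rfl.inter Ioc_ae_eq_Icc.symm
  · rw [Icc_eq_empty_of_lt hts, indicator_empty, Heaviside_of_neg (sub_neg.2 hts), zero_smul]
    exact intervalIntegral.integral_zero

theorem ContinuousOn.exists_continuous_pairwise_commute_extension {α M : Type*} [LinearOrder α]
    [TopologicalSpace α] [OrderTopology α] [Monoid M] [TopologicalSpace M] {f : α → M} {a b : α}
    (hab : a ≤ b) (hf : ContinuousOn f (Icc a b))
    (hc : ∀ x ∈ Icc a b, ∀ y ∈ Icc a b, Commute (f x) (f y)) :
    ∃ g : α → M, Continuous g ∧ (∀ x y, Commute (g x) (g y)) ∧ EqOn g f (Icc a b) :=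
  ⟨IccExtend hab ((Icc a b).domRestrict f), hf.domRestrict.Icc_extend',
    fun x y => hc _ (projIcc a b hab x).2 _ (projIcc a b hab y).2,
    fun _ hx => IccExtend_of_mem hab _ hx⟩

theorem HasDerivAt.pow_succ_of_commute {𝕜 𝔸 : Type*} [NontriviallyNormedField 𝕜] [NormedRing 𝔸]
    [NormedAlgebra 𝕜 𝔸] {f : 𝕜 → 𝔸} {f' : 𝔸} {x : 𝕜} (hf : HasDerivAt f f' x)
    (hc : Commute f' (f x)) (n : ℕ) :
    HasDerivAt (fun y => f y ^ (n + 1)) ((n + 1) • (f' * f x ^ n)) x := by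
  convert hf.fun_pow' (n + 1) using 1
  rw [Finset.sum_congr rfl fun i hi => ?_, Finset.sum_const, Finset.card_range]
  rw [Nat.pred_succ, (hc.pow_right _).eq.symm, mul_assoc, ← pow_add,
    Nat.sub_add_cancel (Nat.lt_succ_iff.1 (Finset.mem_range.1 hi))]

section NormedAlgebra

variable {𝔸 : Type*} [NormedRing 𝔸] [NormedAlgebra ℝ 𝔸] [CompleteSpace 𝔸]

namespace intervalIntegral

variable {μ : Measure ℝ} {f : ℝ → 𝔸} {a b : ℝ}

lemma integral_const_mul_of_intervalIntegrable (hf : IntervalIntegrable f μ a b) (c : 𝔸) :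
    ∫ x in a..b, c * f x ∂μ = c * ∫ x in a..b, f x ∂μ :=
  (ContinuousLinearMap.mul ℝ 𝔸 c).intervalIntegral_comp_comm hf

lemma integral_mul_const_of_intervalIntegrable (hf : IntervalIntegrable f μ a b) (c : 𝔸) :
    ∫ x in a..b, f x * c ∂μ = (∫ x in a..b, f x ∂μ) * c :=
  ((ContinuousLinearMap.mul ℝ 𝔸).flip c).intervalIntegral_comp_comm hf

end intervalIntegral

open intervalIntegral in
lemma Commute.intervalIntegral_right {μ : Measure ℝ} {f : ℝ → 𝔸} {a b : ℝ} {c : 𝔸}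
    (hf : IntervalIntegrable f μ a b) (h : ∀ x, Commute c (f x)) :
    Commute c (∫ x in a..b, f x ∂μ) := by
  change c * _ = _ * c
  rw [← integral_const_mul_of_intervalIntegrable hf, ← integral_mul_const_of_intervalIntegrable hf]
  exact integral_congr fun x _ => h x

theorem integral_mul_smul_pow_of_hasDerivAt_of_commute {f f' : ℝ → 𝔸} {s t : ℝ}
    (hf : ∀ x, HasDerivAt f (f' x) x) (hf' : Continuous f') (hc : ∀ x, Commute (f' x) (f x))
    (hs : f s = 0) (n : ℕ) :
    ∫ x in s..t, f' x * ((n ! : ℝ)⁻¹ • f x ^ n) = ((n + 1)! : ℝ)⁻¹ • f t ^ (n + 1) := by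
  have hfactorial : ((n + 1)! : ℝ)⁻¹ * (n + 1 : ℕ) = (n ! : ℝ)⁻¹ := by
    rw [Nat.factorial_succ]; push_cast; field_simp
  have hderiv : ∀ x, HasDerivAt (fun y => ((n + 1)! : ℝ)⁻¹ • f y ^ (n + 1))
      (f' x * ((n ! : ℝ)⁻¹ • f x ^ n)) x := fun x => by
    refine (((hf x).pow_succ_of_commute (hc x) n).const_smul ((n + 1)! : ℝ)⁻¹).congr_deriv ?_
    rw [← Nat.cast_smul_eq_nsmul ℝ, smul_smul, hfactorial, mul_smul_comm]
  have hcont : Continuous f := continuous_iff_continuousAt.2 fun x => (hf x).continuousAt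
  rw [intervalIntegral.integral_eq_sub_of_hasDerivAt (fun x _ => hderiv x)
    ((hf'.mul ((hcont.pow n).const_smul _)).intervalIntegrable s t), hs,
    zero_pow n.succ_ne_zero, smul_zero, sub_zero]

theorem integral_mul_smul_primitive_pow {B : ℝ → 𝔸} (hB : Continuous B)
    (hcomm : ∀ u v, Commute (B u) (B v)) (s t : ℝ) (n : ℕ) :
    ∫ τ in s..t, B τ * ((n ! : ℝ)⁻¹ • (∫ u in s..τ, B u) ^ n)
      = ((n + 1)! : ℝ)⁻¹ • (∫ u in s..t, B u) ^ (n + 1) :=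
  integral_mul_smul_pow_of_hasDerivAt_of_commute
    (fun τ => (hB.integral_hasStrictDerivAt s τ).hasDerivAt) hB
    (fun τ => Commute.intervalIntegral_right (hB.intervalIntegrable s τ) (hcomm τ))
    intervalIntegral.integral_same n

theorem integral_Heaviside_smul_mul_Heaviside_smul {a b s t : ℝ} (has : a ≤ s) (htb : t ≤ b)
    (M : 𝔸) {g : ℝ → 𝔸} (hg : IntervalIntegrable g volume s t) :
    ∫ τ in a..b, (Heaviside (t - τ) • M) * (Heaviside (τ - s) • g τ)
      = Heaviside (t - s) • (M * ∫ τ in s..t, g τ) := by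
  simp_rw [smul_mul_smul_comm]
  rw [integral_Heaviside_mul_Heaviside_smul has htb,
    intervalIntegral.integral_const_mul_of_intervalIntegrable hg]

theorem integral_Heaviside_smul_mul_Heaviside_smul_primitive_pow {B : ℝ → 𝔸} (hB : Continuous B)
    (hcomm : ∀ u v, Commute (B u) (B v)) {a b s t : ℝ} (has : a ≤ s) (htb : t ≤ b) (M : 𝔸)
    (n : ℕ) :
    ∫ τ in a..b, (Heaviside (t - τ) • M) *
        (Heaviside (τ - s) • (B τ * ((n ! : ℝ)⁻¹ • (∫ u in s..τ, B u) ^ n)))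
      = Heaviside (t - s) • (M * (((n + 1)! : ℝ)⁻¹ • (∫ u in s..t, B u) ^ (n + 1))) := by
  have hprim : Continuous fun τ => ∫ u in s..τ, B u :=
    intervalIntegral.continuous_primitive (fun _ _ => hB.intervalIntegrable _ _) s
  rw [integral_Heaviside_smul_mul_Heaviside_smul has htb M
      (g := fun τ => B τ * ((n ! : ℝ)⁻¹ • (∫ u in s..τ, B u) ^ n))
      ((hB.mul ((hprim.pow n).const_smul _)).intervalIntegrable s t),
    integral_mul_smul_primitive_pow hB hcomm]

theorem hasSum_smul_pow_succ_exp_sub_one (x : 𝔸) :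
    HasSum (fun n => ((n + 1)! : ℝ)⁻¹ • x ^ (n + 1)) (NormedSpace.exp x - 1) := by
  simpa using (hasSum_nat_add_iff' 1).2 (NormedSpace.exp_series_hasSum_exp' (𝕂 := ℝ) x)

end NormedAlgebra

section StarPowers

variable {N : ℕ} {a b : ℝ} {B : ℝ → MatN N} {A : ℝ → ℝ → MatN N}

theorem mStarPow_eq_of_commute (hB : Continuous B) (hcomm : ∀ u v, Commute (B u) (B v))
    (hA : ∀ t ∈ Icc a b, ∀ s, A t s = Heaviside (t - s) • B t) (n : ℕ) :
    ∀ t ∈ Icc a b, ∀ s ∈ Icc a b, mStarPow a b A n t s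
      = Heaviside (t - s) • (B t * ((n ! : ℝ)⁻¹ • (∫ τ in s..t, B τ) ^ n)) := by
  induction n with
  | zero => intro t ht s _; simp [mStarPow, hA t ht]
  | succ n ih =>
    intro t ht s hs
    calc mStarPow a b A (n + 1) t s
        = ∫ τ in a..b, (Heaviside (t - τ) • B t) *
            (Heaviside (τ - s) • (B τ * ((n ! : ℝ)⁻¹ • (∫ u in s..τ, B u) ^ n))) :=
          intervalIntegral.integral_congr fun τ hτ => by
            rw [uIcc_of_le (ht.1.trans ht.2)] at hτ
            simp only [hA t ht, ih τ hτ s hs]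
      _ = _ := integral_Heaviside_smul_mul_Heaviside_smul_primitive_pow hB hcomm hs.1 ht.2 _ n

theorem mStarProd_thetaI_mStarPow_eq_of_commute (hB : Continuous B)
    (hcomm : ∀ u v, Commute (B u) (B v))
    (hA : ∀ t ∈ Icc a b, ∀ s, A t s = Heaviside (t - s) • B t) (n : ℕ) {t s : ℝ}
    (ht : t ∈ Icc a b) (hs : s ∈ Icc a b) :
    mStarProd a b (thetaI N) (mStarPow a b A n) t s
      = Heaviside (t - s) • (((n + 1)! : ℝ)⁻¹ • (∫ τ in s..t, B τ) ^ (n + 1)) := by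
  calc mStarProd a b (thetaI N) (mStarPow a b A n) t s
      = ∫ τ in a..b, (Heaviside (t - τ) • (1 : MatN N)) *
          (Heaviside (τ - s) • (B τ * ((n ! : ℝ)⁻¹ • (∫ u in s..τ, B u) ^ n))) :=
        intervalIntegral.integral_congr fun τ hτ => by
          rw [uIcc_of_le (ht.1.trans ht.2)] at hτ
          simp only [thetaI, mStarPow_eq_of_commute hB hcomm hA n τ hτ s hs]
    _ = _ := by
      rw [integral_Heaviside_smul_mul_Heaviside_smul_primitive_pow hB hcomm hs.1 ht.2, one_mul]

end StarPowers

theorem dyson_series_eq_exp_of_commute_general {N : ℕ} (a b : ℝ)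
    (At : ℝ → MatN N) (hcont : ContinuousOn At (Icc a b))
    (hcomm : ∀ t ∈ Icc a b, ∀ t' ∈ Icc a b, At t * At t' = At t' * At t)
    (A : ℝ → ℝ → MatN N) (hA : ∀ t s, A t s = Heaviside (t - s) • At t) :
    ∀ t ∈ Icc a b, ∀ s ∈ Icc a b,
      Heaviside (t - s) • (1 : MatN N)
          + ∑' n : ℕ, mStarProd a b (thetaI N) (mStarPow a b A n) t s
        = Heaviside (t - s) • NormedSpace.exp (∫ τ in s..t, At τ) := by
  intro t ht s hs
  obtain ⟨B, hB, hBcomm, hBAt⟩ :=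
    hcont.exists_continuous_pairwise_commute_extension (ht.1.trans ht.2) hcomm
  have hAB : ∀ t ∈ Icc a b, ∀ s, A t s = Heaviside (t - s) • B t := fun t ht s => by
    rw [hA, hBAt ht]
  have hintegral : ∫ τ in s..t, At τ = ∫ τ in s..t, B τ :=
    intervalIntegral.integral_congr (hBAt.mono (uIcc_subset_Icc hs ht)).symm
  rw [hintegral, tsum_congr fun n => mStarProd_thetaI_mStarPow_eq_of_commute hB hBcomm hAB n ht hs,
    ((hasSum_smul_pow_succ_exp_sub_one _).const_smul _).tsum_eq, smul_sub]
  abel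

/-- If `Ã(t)` and `Ã(t')` commute for all `t, t' ∈ [a,b]`, then
`Θ(t-s) I + ∑_{n≥1} (Θ ★ A^{★n})(t,s) = exp(∫_s^t Ã(τ) dτ) Θ(t-s)`, where
`A(t,s) = Ã(t)Θ(t-s)` and `exp` is the matrix exponential
(here `mStarPow a b A n = A^{★(n+1)}`). -/
theorem dyson_series_eq_exp_of_commute {N : ℕ} (a b : ℝ) (hab : a ≤ b)
    (At : ℝ → MatN N) (hcont : ContinuousOn At (Icc a b))
    (hcomm : ∀ t ∈ Icc a b, ∀ t' ∈ Icc a b, At t * At t' = At t' * At t)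
    (A : ℝ → ℝ → MatN N) (hA : ∀ t s, A t s = Heaviside (t - s) • At t) :
    ∀ t ∈ Icc a b, ∀ s ∈ Icc a b,
      Heaviside (t - s) • (1 : MatN N)
          + ∑' n : ℕ, mStarProd a b (thetaI N) (mStarPow a b A n) t s
        = Heaviside (t - s) • NormedSpace.exp (∫ τ in s..t, At τ) :=
  dyson_series_eq_exp_of_commute_general a b At hcont hcomm A hA
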